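/- arXiv:1606.08828 — 2 statements merged into one kernel-verified Lean document; each statement's English description precedes it below -/
import Mathlib

section
/- In any zero-error SPIR scheme, for every message index k ∈ {1,…,K} and every database index n ∈ {1,…,N}, the conditional entropy of the answer given the query is at most the entropy of the common randomness: H(A_n^{[k]} | Q_n^{[k]}) ≤ H(S). -/
/-!
A single answer–query pair `T = (A_n^[k], Q_n^[k])` is independent of the whole message tuple.
Pick `k' ≠ k` and write the messages as `X = W_k`, `C = W_{k'}` and the rest `U`. Database-privacy
for `k` gives `I(C,U; T) = 0`. By user-privacy `T` may be replaced in `I(X; T | C,U)` by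
`T' = (A_n^[k'], Q_n^[k'])`; both `T'` and `C` are functions of the user's view `G'` when
retrieving `W_{k'}`, so `I(X; T' | C,U) ≤ I(X; G' | C,U) ≤ I(X,U; G') = 0` by database-privacy
for `k'`. Finally `A` is a function of `(Q, W, S)`, so
`H(A | Q) = H(A | Q) - I(W; A,Q) ≤ H(A | Q,W) ≤ H(S)`.
-/

open Finset

attribute [local instance] Classical.propDecidable

/-- Probability that the random variable `X` takes the value `a`, on a finite
sample space `Ω` with probability mass function `p`. -/
noncomputable def prob {Ω α : Type*} [Fintype Ω] (p : Ω → ℝ) (X : Ω → α) (a : α) : ℝ :=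
  ∑ ω : Ω, if X ω = a then p ω else 0

/-- Shannon entropy (in bits) of the random variable `X`. -/
noncomputable def ent {Ω α : Type*} [Fintype Ω] [Fintype α] (p : Ω → ℝ) (X : Ω → α) : ℝ :=
  - ∑ a : α, prob p X a * Real.logb 2 (prob p X a)

/-- Conditional Shannon entropy (in bits) `H(X | Y)`. -/
noncomputable def condEnt {Ω α β : Type*} [Fintype Ω] [Fintype α] [Fintype β]
    (p : Ω → ℝ) (X : Ω → α) (Y : Ω → β) : ℝ :=
  ent p (fun ω => (X ω, Y ω)) - ent p Y

/-- Shannon mutual information (in bits) `I(X ; Y)`. -/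
noncomputable def mutInfo {Ω α β : Type*} [Fintype Ω] [Fintype α] [Fintype β]
    (p : Ω → ℝ) (X : Ω → α) (Y : Ω → β) : ℝ :=
  ent p X + ent p Y - ent p (fun ω => (X ω, Y ω))

/-- `X` and `Y` are identically distributed. -/
def IdentDist {Ω α : Type*} [Fintype Ω] (p : Ω → ℝ) (X Y : Ω → α) : Prop :=
  ∀ a : α, prob p X a = prob p Y a

/-- `X` is uniformly distributed on `α`. -/
def Unif {Ω α : Type*} [Fintype Ω] [Fintype α] (p : Ω → ℝ) (X : Ω → α) : Prop :=
  ∀ a : α, prob p X a = 1 / (Fintype.card α : ℝ)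


section Entropy

variable {Ω α β γ : Type*} [Fintype Ω] {p : Ω → ℝ}

lemma prob_nonneg (hp0 : ∀ ω, 0 ≤ p ω) (X : Ω → α) (a : α) : 0 ≤ prob p X a :=
  sum_nonneg fun ω _ => ite_nonneg (hp0 ω) le_rfl

lemma le_prob_apply (hp0 : ∀ ω, 0 ≤ p ω) (X : Ω → α) (ω : Ω) :
    p ω ≤ prob p X (X ω) := by
  simpa [prob] using single_le_sum (fun ω' _ => ite_nonneg (hp0 ω') le_rfl) (mem_univ ω)
    (f := fun ω' => if X ω' = X ω then p ω' else 0)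

lemma prob_le_prob_comp (hp0 : ∀ ω, 0 ≤ p ω) (X : Ω → α) (f : α → β) (a : α) :
    prob p X a ≤ prob p (fun ω => f (X ω)) (f a) :=
  sum_le_sum fun ω _ => by
    by_cases hX : X ω = a
    · simp [hX]
    · simpa [hX] using ite_nonneg (hp0 ω) le_rfl

lemma sum_prob_mul [Fintype α] (X : Ω → α) (h : α → ℝ) :
    ∑ a, prob p X a * h a = ∑ ω, p ω * h (X ω) := by
  simp only [prob, sum_mul, ite_mul, zero_mul]
  rw [sum_comm]
  simp

lemma sum_prob_eq_one (hp1 : ∑ ω, p ω = 1) [Fintype α] (X : Ω → α) :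
    ∑ a, prob p X a = 1 := by
  simpa [hp1] using sum_prob_mul (p := p) X 1

lemma sum_prob_prod_left [Fintype α] (X : Ω → α) (Y : Ω → β) (b : β) :
    ∑ a, prob p (fun ω => (X ω, Y ω)) (a, b) = prob p Y b := by
  simp only [prob, Prod.mk.injEq]
  rw [sum_comm]
  simp [ite_and]

lemma ent_eq_neg_sum [Fintype α] (X : Ω → α) :
    ent p X = -∑ ω, p ω * Real.logb 2 (prob p X (X ω)) := by
  rw [ent, sum_prob_mul X fun a => Real.logb 2 (prob p X a)]

lemma ent_congr [Fintype α] [Fintype β] {X : Ω → α} {Y : Ω → β}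
    (h : ∀ ω ω', X ω = X ω' ↔ Y ω = Y ω') : ent p X = ent p Y := by
  have hprob : ∀ ω, prob p X (X ω) = prob p Y (Y ω) := fun ω =>
    sum_congr rfl fun ω' _ => by simp only [h ω' ω]
  simp only [ent_eq_neg_sum, hprob]

lemma ent_le_ent_of_comp (hp0 : ∀ ω, 0 ≤ p ω) [Fintype α] [Fintype β]
    {X : Ω → α} {Y : Ω → β} (f : α → β) (h : ∀ ω, Y ω = f (X ω)) : ent p Y ≤ ent p X := by
  obtain rfl : Y = fun ω => f (X ω) := funext h
  rw [ent_eq_neg_sum, ent_eq_neg_sum, neg_le_neg_iff]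
  refine sum_le_sum fun ω _ => ?_
  rcases (hp0 ω).eq_or_lt with hω | hω
  · simp [← hω]
  · exact mul_le_mul_of_nonneg_left (Real.logb_le_logb_of_le one_lt_two
      (hω.trans_le (le_prob_apply hp0 X ω)) (prob_le_prob_comp hp0 X f (X ω))) hω.le

lemma IdentDist.comp [Fintype α] {X Y : Ω → α} (h : IdentDist p X Y)
    (f : α → β) : IdentDist p (fun ω => f (X ω)) (fun ω => f (Y ω)) := by
  intro b
  have hpush : ∀ Z : Ω → α,
      prob p (fun ω => f (Z ω)) b = ∑ a, prob p Z a * if f a = b then 1 else 0 :=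
    fun Z => by rw [sum_prob_mul]; simp [prob]
  rw [hpush, hpush]
  simp only [h _]

lemma IdentDist.ent_eq [Fintype α] {X Y : Ω → α} (h : IdentDist p X Y) :
    ent p X = ent p Y := by
  simp only [ent, h _]

lemma sum_mul_logb_nonpos (hp0 : ∀ ω, 0 ≤ p ω) (hp1 : ∑ ω, p ω = 1) (φ : Ω → ℝ)
    (hφ : ∀ ω, 0 < p ω → 0 < φ ω) (hsum : ∑ ω, p ω * φ ω ≤ 1) :
    ∑ ω, p ω * Real.logb 2 (φ ω) ≤ 0 := by
  have hlog2 : 0 < Real.log 2 := Real.log_pos one_lt_two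
  calc ∑ ω, p ω * Real.logb 2 (φ ω) ≤ ∑ ω, p ω * ((φ ω - 1) / Real.log 2) := by
        refine sum_le_sum fun ω _ => ?_
        rcases (hp0 ω).eq_or_lt with hω | hω
        · simp [← hω]
        · refine mul_le_mul_of_nonneg_left ?_ hω.le
          exact div_le_div_of_nonneg_right (Real.log_le_sub_one_of_pos (hφ ω hω)) hlog2.le
    _ = (∑ ω, p ω * φ ω - ∑ ω, p ω) / Real.log 2 := by
        rw [← sum_sub_distrib, sum_div]
        simp only [mul_div_assoc', mul_sub, mul_one]
    _ ≤ 0 := div_nonpos_of_nonpos_of_nonneg (by linarith) hlog2.le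

lemma ent_submodular (hp0 : ∀ ω, 0 ≤ p ω) (hp1 : ∑ ω, p ω = 1)
    [Fintype α] [Fintype β] [Fintype γ] (X : Ω → α) (Y : Ω → β) (Z : Ω → γ) :
    ent p (fun ω => (X ω, Y ω, Z ω)) + ent p Z
      ≤ ent p (fun ω => (X ω, Z ω)) + ent p (fun ω => (Y ω, Z ω)) := by
  set r := prob p (fun ω => (X ω, Y ω, Z ω))
  set u := prob p (fun ω => (X ω, Z ω))
  set v := prob p (fun ω => (Y ω, Z ω))
  set t := prob p Z
  -- Gibbs' inequality for `φ`, the ratio of `P(X,Z) P(Y,Z) / P(Z)` to `P(X,Y,Z)`, is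
  -- `I(X;Y|Z) ≥ 0`.
  set φ : α × β × γ → ℝ := fun w => v (w.2.1, w.2.2) * u (w.1, w.2.2) / (r w * t w.2.2)
  have hφ_sum : ∑ ω, p ω * φ (X ω, Y ω, Z ω) ≤ 1 := by
    rw [← sum_prob_mul (fun ω => (X ω, Y ω, Z ω)) φ]
    calc ∑ w, r w * φ w
        ≤ ∑ w : α × β × γ, v (w.2.1, w.2.2) * u (w.1, w.2.2) / t w.2.2 := by
          refine sum_le_sum fun w _ => ?_
          have hr0 : 0 ≤ r w := prob_nonneg hp0 _ w
          rcases hr0.eq_or_lt with hr | hr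
          · rw [← hr, zero_mul]
            exact div_nonneg (mul_nonneg (prob_nonneg hp0 _ _) (prob_nonneg hp0 _ _))
              (prob_nonneg hp0 _ _)
          · rw [mul_div_assoc', mul_div_mul_left _ _ hr.ne']
      _ = ∑ z, (∑ y, v (y, z)) * (∑ x, u (x, z)) / t z := by
          simp only [Fintype.sum_prod_type_right, sum_mul_sum, sum_div]
      _ = ∑ z, t z := by simp only [u, v, t, sum_prob_prod_left, mul_self_div_self]
      _ = 1 := sum_prob_eq_one hp1 Z
  have hpos : ∀ ω, 0 < p ω →
      0 < r (X ω, Y ω, Z ω) ∧ 0 < u (X ω, Z ω) ∧ 0 < v (Y ω, Z ω) ∧ 0 < t (Z ω) :=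
    fun ω hω => ⟨hω.trans_le (le_prob_apply hp0 _ ω), hω.trans_le (le_prob_apply hp0 _ ω),
      hω.trans_le (le_prob_apply hp0 _ ω), hω.trans_le (le_prob_apply hp0 _ ω)⟩
  have hφ_pos : ∀ ω, 0 < p ω → 0 < φ (X ω, Y ω, Z ω) := fun ω hω => by
    obtain ⟨hr, hu, hv, ht⟩ := hpos ω hω
    exact div_pos (mul_pos hv hu) (mul_pos hr ht)
  have hlog : ∀ ω, p ω * Real.logb 2 (φ (X ω, Y ω, Z ω)) = p ω * Real.logb 2 (v (Y ω, Z ω))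
      + p ω * Real.logb 2 (u (X ω, Z ω)) - p ω * Real.logb 2 (r (X ω, Y ω, Z ω))
      - p ω * Real.logb 2 (t (Z ω)) := fun ω => by
    rcases (hp0 ω).eq_or_lt with hω | hω
    · simp [← hω]
    obtain ⟨hr, hu, hv, ht⟩ := hpos ω hω
    simp only [φ, Real.logb_div (mul_pos hv hu).ne' (mul_pos hr ht).ne',
      Real.logb_mul hv.ne' hu.ne', Real.logb_mul hr.ne' ht.ne']
    ring
  have hgibbs := sum_mul_logb_nonpos hp0 hp1 _ hφ_pos hφ_sum
  simp only [hlog, sum_sub_distrib, sum_add_distrib] at hgibbs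
  simp only [ent_eq_neg_sum]
  linarith

lemma ent_pair_le_add (hp0 : ∀ ω, 0 ≤ p ω) (hp1 : ∑ ω, p ω = 1) [Fintype α]
    [Fintype β] (X : Ω → α) (Y : Ω → β) : ent p (fun ω => (X ω, Y ω)) ≤ ent p X + ent p Y := by
  have h := ent_submodular hp0 hp1 X Y fun _ => ()
  have hconst : ent p (fun _ : Ω => ()) = 0 := by simp [ent, prob, hp1]
  have hXY : ent p (fun ω => (X ω, Y ω, ())) = ent p (fun ω => (X ω, Y ω)) :=
    ent_congr fun ω ω' => by simp
  have hX : ent p (fun ω => (X ω, ())) = ent p X := ent_congr fun ω ω' => by simp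
  have hY : ent p (fun ω => (Y ω, ())) = ent p Y := ent_congr fun ω ω' => by simp
  linarith

lemma mutInfo_nonneg (hp0 : ∀ ω, 0 ≤ p ω) (hp1 : ∑ ω, p ω = 1) [Fintype α]
    [Fintype β] (X : Ω → α) (Y : Ω → β) : 0 ≤ mutInfo p X Y :=
  sub_nonneg.mpr (ent_pair_le_add hp0 hp1 X Y)

lemma mutInfo_congr_left {α' : Type*} [Fintype α] [Fintype α'] [Fintype β]
    {X : Ω → α} {X' : Ω → α'} (h : ∀ ω ω', X ω = X ω' ↔ X' ω = X' ω') (Y : Ω → β) :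
    mutInfo p X Y = mutInfo p X' Y := by
  have hXY : ent p (fun ω => (X ω, Y ω)) = ent p (fun ω => (X' ω, Y ω)) :=
    ent_congr fun ω ω' => by simp only [Prod.mk.injEq, h]
  rw [mutInfo, mutInfo, ent_congr h, hXY]

lemma mutInfo_le_mutInfo_of_comp (hp0 : ∀ ω, 0 ≤ p ω) (hp1 : ∑ ω, p ω = 1)
    [Fintype α] [Fintype β] [Fintype γ] (X : Ω → α) {Y : Ω → β} {Z : Ω → γ}
    (f : β → γ) (h : ∀ ω, Z ω = f (Y ω)) : mutInfo p X Z ≤ mutInfo p X Y := by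
  have hsub := ent_submodular hp0 hp1 X Y Z
  have hXYZ : ent p (fun ω => (X ω, Y ω, Z ω)) = ent p (fun ω => (X ω, Y ω)) :=
    ent_congr fun ω ω' => by simp only [Prod.mk.injEq, h]; grind
  have hYZ : ent p (fun ω => (Y ω, Z ω)) = ent p Y :=
    ent_congr fun ω ω' => by simp only [Prod.mk.injEq, h]; grind
  simp only [mutInfo]
  linarith

theorem mutInfo_eq_zero_of_private_views (hp0 : ∀ ω, 0 ≤ p ω) (hp1 : ∑ ω, p ω = 1)
    {𝒳 𝒞 𝒰 𝒯 𝒢 𝒢' : Type*} [Fintype 𝒳] [Fintype 𝒞] [Fintype 𝒰] [Fintype 𝒯]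
    [Fintype 𝒢] [Fintype 𝒢'] {X : Ω → 𝒳} {C : Ω → 𝒞} {U : Ω → 𝒰} {T T' : Ω → 𝒯}
    {G : Ω → 𝒢} {G' : Ω → 𝒢'} (fT : 𝒢 → 𝒯) (hT : ∀ ω, T ω = fT (G ω))
    (fT' : 𝒢' → 𝒯) (hT' : ∀ ω, T' ω = fT' (G' ω)) (fC : 𝒢' → 𝒞) (hC : ∀ ω, C ω = fC (G' ω))
    (hswap : IdentDist p (fun ω => ((X ω, C ω, U ω), T ω))
      (fun ω => ((X ω, C ω, U ω), T' ω)))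
    (hG : mutInfo p (fun ω => (C ω, U ω)) G = 0)
    (hG' : mutInfo p (fun ω => (X ω, U ω)) G' = 0) :
    mutInfo p (fun ω => (X ω, C ω, U ω)) T = 0 := by
  have hCU : mutInfo p (fun ω => (C ω, U ω)) T ≤ 0 :=
    hG ▸ mutInfo_le_mutInfo_of_comp hp0 hp1 _ fT hT
  have hswapCU := (hswap.comp fun z => ((z.1.2.1, z.1.2.2), z.2)).ent_eq
  have hswapXCU := hswap.ent_eq
  have hprocess := ent_submodular hp0 hp1 X G' fun ω => (C ω, U ω, T' ω)
  have hXCU := ent_submodular hp0 hp1 X C U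
  have hUG' := ent_pair_le_add hp0 hp1 U G'
  have e₁ : ent p (fun ω => (X ω, G' ω, C ω, U ω, T' ω))
      = ent p (fun ω => ((X ω, U ω), G' ω)) :=
    ent_congr fun ω ω' => by simp only [Prod.mk.injEq, hT', hC]; grind
  have e₂ : ent p (fun ω => (G' ω, C ω, U ω, T' ω)) = ent p (fun ω => (U ω, G' ω)) :=
    ent_congr fun ω ω' => by simp only [Prod.mk.injEq, hT', hC]; grind
  have e₃ : ent p (fun ω => (X ω, C ω, U ω, T' ω))
      = ent p (fun ω => ((X ω, C ω, U ω), T' ω)) :=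
    ent_congr fun ω ω' => by simp only [Prod.mk.injEq]; grind
  have e₄ : ent p (fun ω => (C ω, U ω, T' ω)) = ent p (fun ω => ((C ω, U ω), T' ω)) :=
    ent_congr fun ω ω' => by simp only [Prod.mk.injEq]; grind
  refine le_antisymm ?_ (mutInfo_nonneg hp0 hp1 _ _)
  simp only [mutInfo] at *
  linarith

theorem condEnt_le_ent_of_mutInfo_eq_zero (hp0 : ∀ ω, 0 ≤ p ω) (hp1 : ∑ ω, p ω = 1)
    {𝒜 𝒬 𝒲 𝒮 : Type*} [Fintype 𝒜] [Fintype 𝒬] [Fintype 𝒲] [Fintype 𝒮]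
    {A : Ω → 𝒜} {Q : Ω → 𝒬} (W : Ω → 𝒲) (S : Ω → 𝒮) (g : 𝒬 → 𝒲 → 𝒮 → 𝒜)
    (hA : ∀ ω, A ω = g (Q ω) (W ω) (S ω)) (hW : mutInfo p W (fun ω => (A ω, Q ω)) = 0) :
    condEnt p A Q ≤ ent p S := by
  have hdet : ent p (fun ω => (W ω, A ω, Q ω)) ≤ ent p (fun ω => (S ω, Q ω, W ω)) :=
    ent_le_ent_of_comp hp0 (fun z => (z.2.2, g z.2.1 z.2.2 z.1, z.2.1)) fun ω => by rw [hA]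
  have hS := ent_pair_le_add hp0 hp1 S fun ω => (Q ω, W ω)
  have hQW := ent_pair_le_add hp0 hp1 Q W
  simp only [mutInfo, condEnt] at *
  linarith

end Entropy

theorem spir_answer_entropy_le_common_randomness_general
    (K N L : ℕ) (hK : 2 ≤ K)
    (Ω : Type*) [Fintype Ω]
    (p : Ω → ℝ) (hp0 : ∀ ω, 0 ≤ p ω) (hp1 : ∑ ω : Ω, p ω = 1)
    (𝓢 𝓕 : Type*) [Fintype 𝓢] [Fintype 𝓕]
    (𝓠 𝓐 : Fin N → Type*) [∀ n, Fintype (𝓠 n)] [∀ n, Fintype (𝓐 n)]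
    (W : Fin K → Ω → (Fin L → ZMod 2)) (S : Ω → 𝓢) (F : Ω → 𝓕)
    (Q : ∀ (_ : Fin K) (n : Fin N), Ω → 𝓠 n) (A : ∀ (_ : Fin K) (n : Fin N), Ω → 𝓐 n)
    -- each answer is a deterministic function of the query, the messages and `S`
    (hA : ∀ k n, ∃ g : 𝓠 n → (∀ _ : Fin K, Fin L → ZMod 2) → 𝓢 → 𝓐 n,
      ∀ ω, A k n ω = g (Q k n ω) (fun j => W j ω) (S ω))
    -- correctness: `W_k` is decodable from the answers and `F`
    (hCorrect : ∀ k, ∃ g : (∀ n, 𝓐 n) → 𝓕 → (Fin L → ZMod 2),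
      ∀ ω, W k ω = g (fun n => A k n ω) (F ω))
    -- user-privacy
    (hUserPriv : ∀ (n : Fin N) (k k' : Fin K),
      IdentDist p (fun ω => (Q k n ω, A k n ω, (fun j => W j ω), S ω))
                  (fun ω => (Q k' n ω, A k' n ω, (fun j => W j ω), S ω)))
    -- database-privacy
    (hDBPriv : ∀ k : Fin K,
      mutInfo p (fun ω => (fun j : {j : Fin K // j ≠ k} => W j.1 ω))
        (fun ω => ((fun n => Q k n ω), (fun n => A k n ω), F ω)) = 0) :
    ∀ (k : Fin K) (n : Fin N), condEnt p (A k n) (Q k n) ≤ ent p S := by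
  intro k n
  have : Nontrivial (Fin K) := Fin.nontrivial_iff_two_le.mpr hK
  obtain ⟨k', hk'⟩ := exists_ne k
  set R : Ω → {j : Fin K // j ≠ k ∧ j ≠ k'} → Fin L → ZMod 2 := fun ω j => W j.1 ω
  have hview : mutInfo p (fun ω => (W k' ω, R ω))
      (fun ω => ((fun m => Q k m ω), (fun m => A k m ω), F ω)) = 0 :=
    hDBPriv k ▸ mutInfo_congr_left (fun ω ω' => by
      simp only [funext_iff, Subtype.forall, Prod.mk.injEq, R]; grind) _
  have hview' : mutInfo p (fun ω => (W k ω, R ω))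
      (fun ω => ((fun m => Q k' m ω), (fun m => A k' m ω), F ω)) = 0 :=
    hDBPriv k' ▸ mutInfo_congr_left (fun ω ω' => by
      simp only [funext_iff, Subtype.forall, Prod.mk.injEq, R]; grind) _
  obtain ⟨decode, hdecode⟩ := hCorrect k'
  have hmsgs := mutInfo_eq_zero_of_private_views hp0 hp1 (fun v => (v.2.1 n, v.1 n))
    (fun _ => rfl) (fun v => (v.2.1 n, v.1 n)) (fun _ => rfl) (fun v => decode v.2.1 v.2.2)
    hdecode ((hUserPriv n k k').comp fun z =>
      ((z.2.2.1 k, z.2.2.1 k', fun j : {j : Fin K // j ≠ k ∧ j ≠ k'} => z.2.2.1 j.1), z.2.1, z.1))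
    hview hview'
  obtain ⟨answer, hanswer⟩ := hA k n
  refine condEnt_le_ent_of_mutInfo_eq_zero hp0 hp1 (fun ω j => W j ω) S answer hanswer ?_
  exact hmsgs ▸ mutInfo_congr_left (fun ω ω' => by
    simp only [funext_iff, Subtype.forall, Prod.mk.injEq, R]; grind) _

/-- In any zero-error SPIR scheme, for every message index `k` and every
database index `n`, `H(A_n^[k] | Q_n^[k]) ≤ H(S)`. -/
theorem spir_answer_entropy_le_common_randomness
    (K N L : ℕ) (hK : 2 ≤ K) (hN : 2 ≤ N) (hL : 1 ≤ L)
    (Ω : Type*) [Fintype Ω]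
    (p : Ω → ℝ) (hp0 : ∀ ω, 0 ≤ p ω) (hp1 : ∑ ω : Ω, p ω = 1)
    (𝓢 𝓕 : Type*) [Fintype 𝓢] [Fintype 𝓕]
    (𝓠 𝓐 : Fin N → Type*) [∀ n, Fintype (𝓠 n)] [∀ n, Fintype (𝓐 n)]
    (W : Fin K → Ω → (Fin L → ZMod 2)) (S : Ω → 𝓢) (F : Ω → 𝓕)
    (Q : ∀ (_ : Fin K) (n : Fin N), Ω → 𝓠 n) (A : ∀ (_ : Fin K) (n : Fin N), Ω → 𝓐 n)
    -- each message is uniformly distributed on the set of `L`-bit strings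
    (hWunif : ∀ k, Unif p (W k))
    -- the messages, the common randomness `S` and the user randomness `F`
    -- are mutually independent
    (hIndep : ∀ (w : ∀ _ : Fin K, Fin L → ZMod 2) (s : 𝓢) (f : 𝓕),
      prob p (fun ω => ((fun k => W k ω), S ω, F ω)) (w, s, f)
        = (∏ k, prob p (W k) (w k)) * prob p S s * prob p F f)
    -- each query is a deterministic function of `F`
    (hQ : ∀ k n, ∃ g : 𝓕 → 𝓠 n, ∀ ω, Q k n ω = g (F ω))
    -- each answer is a deterministic function of the query, the messages and `S`
    (hA : ∀ k n, ∃ g : 𝓠 n → (∀ _ : Fin K, Fin L → ZMod 2) → 𝓢 → 𝓐 n,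
      ∀ ω, A k n ω = g (Q k n ω) (fun j => W j ω) (S ω))
    -- correctness: `W_k` is decodable from the answers and `F`
    (hCorrect : ∀ k, ∃ g : (∀ n, 𝓐 n) → 𝓕 → (Fin L → ZMod 2),
      ∀ ω, W k ω = g (fun n => A k n ω) (F ω))
    -- user-privacy
    (hUserPriv : ∀ (n : Fin N) (k k' : Fin K),
      IdentDist p (fun ω => (Q k n ω, A k n ω, (fun j => W j ω), S ω))
                  (fun ω => (Q k' n ω, A k' n ω, (fun j => W j ω), S ω)))
    -- database-privacy
    (hDBPriv : ∀ k : Fin K,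
      mutInfo p (fun ω => (fun j : {j : Fin K // j ≠ k} => W j.1 ω))
        (fun ω => ((fun n => Q k n ω), (fun n => A k n ω), F ω)) = 0) :
    ∀ (k : Fin K) (n : Fin N), condEnt p (A k n) (Q k n) ≤ ent p S :=
  spir_answer_entropy_le_common_randomness_general K N L hK Ω p hp0 hp1 𝓢 𝓕 𝓠 𝓐 W S F Q A hA
    hCorrect hUserPriv hDBPriv
end

section
/- (Database-privacy of the explicit scheme.) In the explicit SPIR scheme, for every message index k ∈ {1,…,K}, the mutual information I(W_{\overline{k}}; A_1^{[k]}, …, A_N^{[k]}, Q_1^{[k]}, …, Q_N^{[k]}, F) = 0, where W_{\overline{k}} = (W_1, …, W_{k−1}, W_{k+1}, …, W_K); that is, everything the user observes is independent of the undesired messages. -/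
open Finset

attribute [local instance] Classical.propDecidable

/-- The sample space of the explicit SPIR scheme: the message bits
`x = (x_{k,i})_{k ∈ [K], i ∈ [N−1]}`, the common-randomness bit `S`,
and the user-randomness bits `h = (h_{j,i})_{j ∈ [K], i ∈ [N−1]}`. -/
abbrev SchemeOmega (K N : ℕ) : Type :=
  (Fin K → Fin (N - 1) → ZMod 2) × ZMod 2 × (Fin K → Fin (N - 1) → ZMod 2)

/-- The uniform probability mass function on the sample space: all message bits, the
common-randomness bit and the user-randomness bits are i.i.d. uniform. -/
noncomputable def unifP (K N : ℕ) : SchemeOmega K N → ℝ :=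
  fun _ => (Fintype.card (SchemeOmega K N) : ℝ)⁻¹

/-- The query sent to database `n` when the desired message index is `k`:
`Q_1^[k] = h` for the first database (`n = 0`), and `Q_{m+1}^[k] = h + e_{k,m}` for
database `m + 1`, where `e_{k,m}` has a single `1` in coordinate `(k, m)`. -/
def query (K N : ℕ) (k : Fin K) (n : Fin N) (h : Fin K → Fin (N - 1) → ZMod 2) :
    Fin K → Fin (N - 1) → ZMod 2 :=
  fun j i => h j i + (if j = k ∧ (i : ℕ) + 1 = (n : ℕ) then 1 else 0)

/-- The answer of database `n`: the inner product `⟨Q_n^[k], x⟩` of the received query with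
the message bits, plus the common-randomness bit `S`. -/
def answer (K N : ℕ) (k : Fin K) (n : Fin N) (ω : SchemeOmega K N) : ZMod 2 :=
  (∑ j : Fin K, ∑ i : Fin (N - 1), query K N k n ω.2.2 j i * ω.1 j i) + ω.2.1

section AuxLemmas

lemma sum_prob' {Ω α : Type*} [Fintype Ω] [Fintype α] (p : Ω → ℝ) (X : Ω → α) :
    ∑ a : α, prob p X a = ∑ ω : Ω, p ω := by
  unfold prob
  rw [Finset.sum_comm]
  refine Finset.sum_congr rfl fun ω _ => ?_
  rw [Finset.sum_ite_eq Finset.univ (X ω) (fun _ => p ω)]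
  simp

lemma prob_congr' {Ω α : Type*} [Fintype Ω] (p : Ω → ℝ) {X Y : Ω → α}
    (h : ∀ ω, X ω = Y ω) (a : α) : prob p X a = prob p Y a := by
  unfold prob; exact Finset.sum_congr rfl fun ω _ => by rw [h ω]

lemma prob_comp_equiv' {Ω Ω' α : Type*} [Fintype Ω] [Fintype Ω'] (e : Ω' ≃ Ω)
    (p : Ω → ℝ) (X : Ω → α) (a : α) :
    prob p X a = prob (fun ω' => p (e ω')) (fun ω' => X (e ω')) a := by
  unfold prob
  exact (Equiv.sum_comp e (fun ω => if X ω = a then p ω else 0)).symm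

lemma ent_pair_of_indep' {Ω α β : Type*} [Fintype Ω] [Fintype α] [Fintype β]
    (p : Ω → ℝ) (X : Ω → α) (Y : Ω → β)
    (hX : ∑ a : α, prob p X a = 1) (hY : ∑ b : β, prob p Y b = 1)
    (hind : ∀ a b, prob p (fun ω => (X ω, Y ω)) (a, b) = prob p X a * prob p Y b) :
    ent p (fun ω => (X ω, Y ω)) = ent p X + ent p Y := by
  unfold ent
  rw [← neg_add]
  congr 1
  rw [Fintype.sum_prod_type]
  have key : ∀ a b, prob p (fun ω => (X ω, Y ω)) (a, b) *
        Real.logb 2 (prob p (fun ω => (X ω, Y ω)) (a, b))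
      = prob p Y b * (prob p X a * Real.logb 2 (prob p X a))
        + prob p X a * (prob p Y b * Real.logb 2 (prob p Y b)) := by
    intro a b
    rw [hind]
    by_cases h1 : prob p X a = 0
    · simp [h1]
    by_cases h2 : prob p Y b = 0
    · simp [h2]
    rw [Real.logb_mul h1 h2]; ring
  calc ∑ a, ∑ b, prob p (fun ω => (X ω, Y ω)) (a, b) *
        Real.logb 2 (prob p (fun ω => (X ω, Y ω)) (a, b))
      = ∑ a, ∑ b, (prob p Y b * (prob p X a * Real.logb 2 (prob p X a))
        + prob p X a * (prob p Y b * Real.logb 2 (prob p Y b))) :=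
        Finset.sum_congr rfl fun a _ => Finset.sum_congr rfl fun b _ => key a b
    _ = ∑ a, ((∑ b, prob p Y b) * (prob p X a * Real.logb 2 (prob p X a))
        + prob p X a * (∑ b, prob p Y b * Real.logb 2 (prob p Y b))) := by
        refine Finset.sum_congr rfl fun a _ => ?_
        rw [Finset.sum_add_distrib, ← Finset.sum_mul, ← Finset.mul_sum]
    _ = ∑ a, (prob p X a * Real.logb 2 (prob p X a)
        + prob p X a * (∑ b, prob p Y b * Real.logb 2 (prob p Y b))) := by
        simp [hY]
    _ = (∑ a, prob p X a * Real.logb 2 (prob p X a))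
        + ∑ b, prob p Y b * Real.logb 2 (prob p Y b) := by
        rw [Finset.sum_add_distrib, ← Finset.sum_mul, hX, one_mul]

lemma mutInfo_eq_zero_of_indep' {Ω α β : Type*} [Fintype Ω] [Fintype α] [Fintype β]
    (p : Ω → ℝ) (X : Ω → α) (Y : Ω → β)
    (hX : ∑ a : α, prob p X a = 1) (hY : ∑ b : β, prob p Y b = 1)
    (hind : ∀ a b, prob p (fun ω => (X ω, Y ω)) (a, b) = prob p X a * prob p Y b) :
    mutInfo p X Y = 0 := by
  unfold mutInfo
  rw [ent_pair_of_indep' p X Y hX hY hind]; ring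

lemma prob_prod_indep' {β γ α₁ α₂ : Type*} [Fintype β] [Fintype γ]
    (c : ℝ) (f : β → α₁) (g : γ → α₂)
    (hc : c * ((Fintype.card β : ℝ) * (Fintype.card γ : ℝ)) = 1)
    (a : α₁) (b : α₂) :
    prob (fun _ : β × γ => c) (fun ω => (f ω.1, g ω.2)) (a, b)
      = prob (fun _ : β × γ => c) (fun ω => f ω.1) a
        * prob (fun _ : β × γ => c) (fun ω => g ω.2) b := by
  unfold prob
  rw [Fintype.sum_prod_type, Fintype.sum_prod_type, Fintype.sum_prod_type]
  have e1 : ∀ u : β, ∀ v : γ, (if (f u, g v) = (a, b) then c else 0)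
      = (if f u = a then (1:ℝ) else 0) * ((if g v = b then (1:ℝ) else 0) * c) := by
    intro u v
    simp only [Prod.mk.injEq]
    split_ifs with h h1 h2 <;> first | (exfalso; tauto) | ring
  have e2 : ∀ u : β, (if f u = a then c else 0) = (if f u = a then (1:ℝ) else 0) * c := by
    intro u; split_ifs <;> ring
  have e3 : ∀ v : γ, (if g v = b then c else 0) = (if g v = b then (1:ℝ) else 0) * c := by
    intro v; split_ifs <;> ring
  simp_rw [e1, e2, e3, ← Finset.mul_sum, ← Finset.sum_mul, Finset.sum_const,
    Finset.card_univ, nsmul_eq_mul]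
  set NA := ∑ u : β, (if f u = a then (1:ℝ) else 0)
  set NB := ∑ v : γ, (if g v = b then (1:ℝ) else 0)
  linear_combination (-(NA * NB * c)) * hc

/-- The twist involution `(x, S, h) ↦ (x, S + ⟨h, x⟩, h)`. -/
def phi (K N : ℕ) : SchemeOmega K N ≃ SchemeOmega K N where
  toFun ω := (ω.1, ω.2.1 + ∑ j : Fin K, ∑ i : Fin (N-1), ω.2.2 j i * ω.1 j i, ω.2.2)
  invFun ω := (ω.1, ω.2.1 + ∑ j : Fin K, ∑ i : Fin (N-1), ω.2.2 j i * ω.1 j i, ω.2.2)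
  left_inv ω := by
    refine Prod.ext rfl (Prod.ext ?_ rfl)
    show ω.2.1 + _ + _ = ω.2.1
    rw [add_assoc, CharTwo.add_self_eq_zero, add_zero]
  right_inv ω := by
    refine Prod.ext rfl (Prod.ext ?_ rfl)
    show ω.2.1 + _ + _ = ω.2.1
    rw [add_assoc, CharTwo.add_self_eq_zero, add_zero]

/-- Splitting of the sample space into the coordinates `x_{j ≠ k}` and `(x_k, S, h)`. -/
def splitE (K N : ℕ) (k : Fin K) :
    SchemeOmega K N ≃
      (({j : Fin K // j ≠ k} → Fin (N-1) → ZMod 2) ×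
       ((Fin (N-1) → ZMod 2) × ZMod 2 × (Fin K → Fin (N-1) → ZMod 2))) where
  toFun ω := ((fun j => ω.1 j.1), (ω.1 k, ω.2.1, ω.2.2))
  invFun u := ((fun j => if hj : j = k then u.2.1 else u.1 ⟨j, hj⟩), u.2.2.1, u.2.2.2)
  left_inv ω := by
    refine Prod.ext ?_ rfl
    funext j
    by_cases hj : j = k <;> simp [hj]
  right_inv u := by
    refine Prod.ext ?_ (Prod.ext ?_ rfl)
    · funext j; simp [j.2]
    · simp

/-- What the user observes, as a function of `(x_k, S, h)` only (after the twist). -/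
def obsFun (K N : ℕ) (k : Fin K)
    (v : (Fin (N-1) → ZMod 2) × ZMod 2 × (Fin K → Fin (N-1) → ZMod 2)) :
    (Fin N → ZMod 2) × (Fin N → Fin K → Fin (N-1) → ZMod 2) × (Fin K → Fin (N-1) → ZMod 2) :=
  ((fun n => v.2.1 + ∑ i : Fin (N-1), (if (i:ℕ)+1 = (n:ℕ) then 1 else 0) * v.1 i),
   (fun n => query K N k n v.2.2), v.2.2)

/-- The undesired messages `W_{k̄}`. -/
def Xvar (K N : ℕ) (k : Fin K) (ω : SchemeOmega K N) :
    {j : Fin K // j ≠ k} → Fin (N-1) → ZMod 2 :=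
  fun j => ω.1 j.1

/-- Everything the user observes. -/
def Yvar (K N : ℕ) (k : Fin K) (ω : SchemeOmega K N) :
    (Fin N → ZMod 2) × (Fin N → Fin K → Fin (N-1) → ZMod 2) × (Fin K → Fin (N-1) → ZMod 2) :=
  ((fun n : Fin N => answer K N k n ω), (fun n : Fin N => query K N k n ω.2.2), ω.2.2)

lemma answer_phi (K N : ℕ) (k : Fin K) (n : Fin N) (ω : SchemeOmega K N) :
    answer K N k n (phi K N ω)
      = ω.2.1 + ∑ i : Fin (N-1), (if (i:ℕ)+1 = (n:ℕ) then (1:ZMod 2) else 0) * ω.1 k i := by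
  unfold answer phi query
  simp only [Equiv.coe_fn_mk]
  have h1 : ∀ j i, (ω.2.2 j i + (if j = k ∧ (i:ℕ)+1 = (n:ℕ) then (1:ZMod 2) else 0)) * ω.1 j i
      = ω.2.2 j i * ω.1 j i + (if j = k ∧ (i:ℕ)+1 = (n:ℕ) then (1:ZMod 2) else 0) * ω.1 j i :=
    fun j i => add_mul _ _ _
  simp_rw [h1, Finset.sum_add_distrib]
  have h2 : ∑ j : Fin K, ∑ i : Fin (N-1),
        (if j = k ∧ (i:ℕ)+1 = (n:ℕ) then (1:ZMod 2) else 0) * ω.1 j i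
      = ∑ i : Fin (N-1), (if (i:ℕ)+1 = (n:ℕ) then (1:ZMod 2) else 0) * ω.1 k i := by
    rw [Finset.sum_eq_single k]
    · simp
    · intro j _ hj
      simp [hj]
    · simp
  rw [h2]
  have h3 := CharTwo.add_self_eq_zero
      (∑ j : Fin K, ∑ i : Fin (N-1), ω.2.2 j i * ω.1 j i)
  linear_combination h3

lemma Yvar_phi (K N : ℕ) (k : Fin K) (ω : SchemeOmega K N) :
    Yvar K N k (phi K N ω) = obsFun K N k (ω.1 k, ω.2.1, ω.2.2) := by
  refine Prod.ext ?_ rfl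
  funext n
  exact answer_phi K N k n ω

lemma Xvar_split (K N : ℕ) (k : Fin K)
    (u : ({j : Fin K // j ≠ k} → Fin (N-1) → ZMod 2) ×
       ((Fin (N-1) → ZMod 2) × ZMod 2 × (Fin K → Fin (N-1) → ZMod 2))) :
    Xvar K N k ((splitE K N k).symm u) = u.1 := by
  funext j
  show ((splitE K N k).symm u).1 j.1 = u.1 j
  simp [splitE, j.2]

lemma Yvar_phi_split (K N : ℕ) (k : Fin K)
    (u : ({j : Fin K // j ≠ k} → Fin (N-1) → ZMod 2) ×
       ((Fin (N-1) → ZMod 2) × ZMod 2 × (Fin K → Fin (N-1) → ZMod 2))) :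
    Yvar K N k (phi K N ((splitE K N k).symm u)) = obsFun K N k u.2 := by
  rw [Yvar_phi]
  congr 1
  refine Prod.ext ?_ rfl
  show ((splitE K N k).symm u).1 k = u.2.1
  simp [splitE]

lemma card_split (K N : ℕ) (k : Fin K) :
    ((Fintype.card (SchemeOmega K N) : ℝ))⁻¹
      * ((Fintype.card ({j : Fin K // j ≠ k} → Fin (N-1) → ZMod 2) : ℝ)
        * (Fintype.card ((Fin (N-1) → ZMod 2) × ZMod 2 ×
            (Fin K → Fin (N-1) → ZMod 2)) : ℝ)) = 1 := by
  have hcard0 : (Fintype.card (SchemeOmega K N) : ℝ) ≠ 0 := by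
    exact_mod_cast Fintype.card_ne_zero
  have hcardprod : (Fintype.card (SchemeOmega K N) : ℝ)
      = (Fintype.card ({j : Fin K // j ≠ k} → Fin (N-1) → ZMod 2) : ℝ)
        * (Fintype.card ((Fin (N-1) → ZMod 2) × ZMod 2 ×
            (Fin K → Fin (N-1) → ZMod 2)) : ℝ) := by
    rw [← Nat.cast_mul]
    congr 1
    rw [Fintype.card_congr (splitE K N k), Fintype.card_prod]
  rw [← hcardprod]
  exact inv_mul_cancel₀ hcard0

lemma split_indep (K N : ℕ) (k : Fin K)
    (a : {j : Fin K // j ≠ k} → Fin (N-1) → ZMod 2)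
    (b : (Fin N → ZMod 2) × (Fin N → Fin K → Fin (N-1) → ZMod 2) ×
          (Fin K → Fin (N-1) → ZMod 2)) :
    prob (unifP K N) (fun ω => (Xvar K N k ω, Yvar K N k ω)) (a, b)
      = prob (unifP K N) (Xvar K N k) a * prob (unifP K N) (Yvar K N k) b := by
  have key := prob_prod_indep'
    (β := {j : Fin K // j ≠ k} → Fin (N-1) → ZMod 2)
    (γ := (Fin (N-1) → ZMod 2) × ZMod 2 × (Fin K → Fin (N-1) → ZMod 2))
    ((Fintype.card (SchemeOmega K N) : ℝ)⁻¹) (fun v => v) (obsFun K N k)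
    (card_split K N k) a b
  have hXa : prob (unifP K N) (Xvar K N k) a
      = prob (fun _ : ({j : Fin K // j ≠ k} → Fin (N-1) → ZMod 2) ×
            ((Fin (N-1) → ZMod 2) × ZMod 2 × (Fin K → Fin (N-1) → ZMod 2)) =>
          (Fintype.card (SchemeOmega K N) : ℝ)⁻¹)
        (fun u => (fun v => v) u.1) a :=
    (prob_comp_equiv' (splitE K N k).symm (unifP K N) (Xvar K N k) a).trans
      (prob_congr' _ (fun u => Xvar_split K N k u) a)
  have hYb : prob (unifP K N) (Yvar K N k) b
      = prob (fun _ : ({j : Fin K // j ≠ k} → Fin (N-1) → ZMod 2) ×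
            ((Fin (N-1) → ZMod 2) × ZMod 2 × (Fin K → Fin (N-1) → ZMod 2)) =>
          (Fintype.card (SchemeOmega K N) : ℝ)⁻¹)
        (fun u => obsFun K N k u.2) b :=
    (prob_comp_equiv' (phi K N) (unifP K N) (Yvar K N k) b).trans
      ((prob_comp_equiv' (splitE K N k).symm _ _ b).trans
        (prob_congr' _ (fun u => Yvar_phi_split K N k u) b))
  have hZ : prob (unifP K N) (fun ω => (Xvar K N k ω, Yvar K N k ω)) (a, b)
      = prob (fun _ : ({j : Fin K // j ≠ k} → Fin (N-1) → ZMod 2) ×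
            ((Fin (N-1) → ZMod 2) × ZMod 2 × (Fin K → Fin (N-1) → ZMod 2)) =>
          (Fintype.card (SchemeOmega K N) : ℝ)⁻¹)
        (fun u => ((fun v => v) u.1, obsFun K N k u.2)) (a, b) :=
    (prob_comp_equiv' (phi K N) (unifP K N) _ (a, b)).trans
      ((prob_comp_equiv' (splitE K N k).symm _ _ (a, b)).trans
        (prob_congr' _ (fun u => by
          show (Xvar K N k (phi K N ((splitE K N k).symm u)),
                Yvar K N k (phi K N ((splitE K N k).symm u)))
              = ((fun v => v) u.1, obsFun K N k u.2)
          rw [Yvar_phi_split K N k u]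
          refine Prod.ext ?_ rfl
          exact Xvar_split K N k u) (a, b)))
  rw [hZ, hXa, hYb]
  exact key

lemma sum_unifP (K N : ℕ) : ∑ ω : SchemeOmega K N, unifP K N ω = 1 := by
  unfold unifP
  rw [Finset.sum_const, Finset.card_univ, nsmul_eq_mul]
  refine mul_inv_cancel₀ ?_
  exact_mod_cast Fintype.card_ne_zero

end AuxLemmas

/-- (Database-privacy of the explicit scheme.) For every message index `k`,
`I(W_{k̄} ; A_1^[k], …, A_N^[k], Q_1^[k], …, Q_N^[k], F) = 0`: everything the user observes
is independent of the undesired messages. -/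
theorem explicit_scheme_database_privacy (K N : ℕ) (hK : 2 ≤ K) (hN : 2 ≤ N) :
    ∀ k : Fin K,
      mutInfo (unifP K N)
        (fun ω => (fun j : {j : Fin K // j ≠ k} => ω.1 j.1))
        (fun ω => ((fun n : Fin N => answer K N k n ω),
                   (fun n : Fin N => query K N k n ω.2.2), ω.2.2)) = 0 := by
  intro k
  refine mutInfo_eq_zero_of_indep' (unifP K N) (Xvar K N k) (Yvar K N k) ?_ ?_ ?_
  · rw [sum_prob' (unifP K N) (Xvar K N k), sum_unifP]
  · rw [sum_prob' (unifP K N) (Yvar K N k), sum_unifP]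
  · intro a b
    exact split_indep K N k a b
end
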